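/- arXiv:2009.13817 — 4 statements merged into one kernel-verified Lean document; each statement's English description precedes it below -/
import Mathlib

section
/- Let k_w > 0, θ, θ⁰ ∈ ℝ^p, and let g : ℝ → Matrix (Fin n) (Fin p) ℝ and φ : ℝ → ℝⁿ be continuous. Suppose x, x̂ : ℝ → ℝⁿ and W : ℝ → Matrix (Fin n) (Fin p) ℝ are differentiable on [0,∞) and satisfy for all t ≥ 0: x'(t) = g(t) *ᵥ θ + φ(t); x̂'(t) = g(t) *ᵥ θ⁰ + φ(t) + k_w • (x(t) - x̂(t)) with x̂(0) = x(0); and W'(t) = -k_w • W(t) + g(t) with W(0) = 0. Then x(t) - x̂(t) = W(t) *ᵥ (θ - θ⁰) for all t ≥ 0. -/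
open Matrix

attribute [local instance] Matrix.normedAddCommGroup Matrix.normedSpace

/-- Prediction-error identity of the adaptive observer: with plant
`x' = g(t)θ + φ(t)`, predictor `x̂' = g(t)θ⁰ + φ(t) + k_w (x - x̂)`, `x̂(0) = x(0)`, and
filter `W' = -k_w W + g(t)`, `W(0) = 0`, we have `x(t) - x̂(t) = W(t)(θ - θ⁰)` for all
`t ≥ 0`. -/
theorem stmt_3 {n p : ℕ} (k_w : ℝ) (hk : 0 < k_w) (θ θ0 : Fin p → ℝ)
    (g : ℝ → Matrix (Fin n) (Fin p) ℝ) (φ : ℝ → (Fin n → ℝ))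
    (hg : Continuous g) (hφ : Continuous φ)
    (x xhat : ℝ → (Fin n → ℝ)) (W : ℝ → Matrix (Fin n) (Fin p) ℝ)
    (hx : ∀ t : ℝ, 0 ≤ t → HasDerivAt x (g t *ᵥ θ + φ t) t)
    (hxhat : ∀ t : ℝ, 0 ≤ t →
      HasDerivAt xhat (g t *ᵥ θ0 + φ t + k_w • (x t - xhat t)) t)
    (hinit : xhat 0 = x 0)
    (hW : ∀ t : ℝ, 0 ≤ t → HasDerivAt W (-k_w • W t + g t) t)
    (hW0 : W 0 = 0) :
    ∀ t : ℝ, 0 ≤ t → x t - xhat t = W t *ᵥ (θ - θ0) := by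
  -- linear map "apply to θ - θ0"
  let L : Matrix (Fin n) (Fin p) ℝ →L[ℝ] (Fin n → ℝ) :=
    LinearMap.toContinuousLinearMap
      { toFun := fun M => M *ᵥ (θ - θ0)
        map_add' := fun M N => Matrix.add_mulVec M N (θ - θ0)
        map_smul' := fun c M => Matrix.smul_mulVec c M (θ - θ0) }
  set η : ℝ → (Fin n → ℝ) := fun t => x t - xhat t - W t *ᵥ (θ - θ0) with hη_def
  have hη : ∀ t : ℝ, 0 ≤ t → HasDerivAt η ((-k_w) • η t) t := by
    intro t ht
    have h1 : HasDerivAt (fun s => W s *ᵥ (θ - θ0)) ((-k_w • W t + g t) *ᵥ (θ - θ0)) t :=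
      (L.hasFDerivAt.comp_hasDerivAt t (hW t ht))
    have h2 := ((hx t ht).sub (hxhat t ht)).sub h1
    have heq : g t *ᵥ θ + φ t - (g t *ᵥ θ0 + φ t + k_w • (x t - xhat t))
        - (-k_w • W t + g t) *ᵥ (θ - θ0) = (-k_w) • η t := by
      simp only [hη_def]
      simp only [Matrix.add_mulVec, Matrix.neg_mulVec, Matrix.smul_mulVec,
        Matrix.mulVec_sub]
      module
    exact heq ▸ h2
  intro t ht
  have key : η t = 0 := by
    have h0 : η 0 = 0 := by simp [hη_def, hinit, hW0]
    have := ODE_solution_unique (v := fun _ y => (-k_w) • y) (K := ‖-k_w‖₊)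
      (f := η) (g := fun _ => (0 : Fin n → ℝ)) (a := 0) (b := t)
      (fun _ => lipschitzWith_smul (-k_w))
      (fun s hs => (hη s hs.1).continuousAt.continuousWithinAt)
      (fun s hs => (hη s hs.1).hasDerivWithinAt)
      continuousOn_const
      (fun s _ => by simpa using (hasDerivWithinAt_const s _ (0 : Fin n → ℝ)))
      (by simpa using h0)
    simpa using this ⟨ht, le_refl t⟩
  exact sub_eq_zero.mp key
end

section
/- Let γ > 0, μ > 0, t_c ≥ 0, and let Q : ℝ → Matrix (Fin p) (Fin p) ℝ be continuous with Q(t) symmetric positive semidefinite for all t ≥ 0 and Q(t) - μ • 1 positive semidefinite for all t ≥ t_c. If e : ℝ → ℝ^p is differentiable and satisfies e'(t) = -γ • (Q(t) *ᵥ e(t)) for all t ≥ 0, then ‖e(t)‖ ≤ ‖e(t_c)‖ · exp(-γ μ (t - t_c)) for all t ≥ t_c. -/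
open Matrix

lemma inner_eq_dot' {p : ℕ} (x y : EuclideanSpace ℝ (Fin p)) :
    (inner ℝ x y : ℝ) = dotProduct (x : Fin p → ℝ) y := by
  simp [PiLp.inner_apply, dotProduct, RCLike.inner_apply, mul_comm]

/-- Exponential convergence of the parameter-error dynamics `e' = -γ Q(t) e`: once the
information matrix satisfies `Q(t) ≽ μ I` for `t ≥ t_c` (with `Q(t) ≽ 0` throughout),
the error decays exponentially: `‖e(t)‖ ≤ ‖e(t_c)‖ exp(-γ μ (t - t_c))` for `t ≥ t_c`. -/
theorem stmt_6 {p : ℕ} (γ μ t_c : ℝ) (hγ : 0 < γ) (hμ : 0 < μ) (htc : 0 ≤ t_c)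
    (Q : ℝ → Matrix (Fin p) (Fin p) ℝ) (hQcont : Continuous Q)
    (hQpsd : ∀ t : ℝ, 0 ≤ t → (Q t).PosSemidef)
    (hQexc : ∀ t : ℝ, t_c ≤ t →
      (Q t - μ • (1 : Matrix (Fin p) (Fin p) ℝ)).PosSemidef)
    (e : ℝ → EuclideanSpace ℝ (Fin p))
    (he : ∀ t : ℝ, 0 ≤ t → HasDerivAt e (-(γ • WithLp.toLp 2 (Q t *ᵥ e t)) : EuclideanSpace ℝ (Fin p)) t) :
    ∀ t : ℝ, t_c ≤ t → ‖e t‖ ≤ ‖e t_c‖ * Real.exp (-(γ * μ * (t - t_c))) := by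
  set c : ℝ := 2 * γ * μ with hc
  set F : ℝ → ℝ := fun s => ‖e s‖ ^ 2 * Real.exp (c * (s - t_c)) with hF
  -- derivative of F at points t ≥ 0
  have hFderiv : ∀ t : ℝ, 0 ≤ t → HasDerivAt F
      ((2 * (inner ℝ (e t) (-(γ • WithLp.toLp 2 (Q t *ᵥ e t)) : EuclideanSpace ℝ (Fin p)) : ℝ))
        * Real.exp (c * (t - t_c)) + ‖e t‖ ^ 2 * (Real.exp (c * (t - t_c)) * c)) t := by
    intro t ht
    have h := he t ht
    have h2 := h.inner ℝ h
    have hfun : (fun s => (inner ℝ (e s) (e s) : ℝ)) = fun s => ‖e s‖ ^ 2 :=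
      funext fun s => real_inner_self_eq_norm_sq _
    rw [hfun] at h2
    have hN : HasDerivAt (fun s => ‖e s‖ ^ 2)
        (2 * (inner ℝ (e t) (-(γ • WithLp.toLp 2 (Q t *ᵥ e t)) : EuclideanSpace ℝ (Fin p)) : ℝ)) t := by
      rw [real_inner_comm (e t)] at h2
      rw [two_mul]
      exact h2
    have hE : HasDerivAt (fun s => Real.exp (c * (s - t_c)))
        (Real.exp (c * (t - t_c)) * c) t := by
      have := (((hasDerivAt_id t).sub_const t_c).const_mul c).exp
      simpa [mul_comm] using this
    exact hN.mul hE
  -- the derivative is nonpositive for t > t_c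
  have hkey : ∀ t : ℝ, t_c ≤ t →
      (inner ℝ (e t) (-(γ • WithLp.toLp 2 (Q t *ᵥ e t)) : EuclideanSpace ℝ (Fin p)) : ℝ)
        ≤ -(γ * μ) * ‖e t‖ ^ 2 := by
    intro t ht
    set x : Fin p → ℝ := (e t : Fin p → ℝ) with hx
    have hq := (hQexc t ht).dotProduct_mulVec_nonneg x
    have hsx : star x = x := by funext i; simp
    rw [hsx, sub_mulVec, dotProduct_sub, sub_nonneg, smul_mulVec, one_mulVec,
      dotProduct_smul] at hq
    have hdd : dotProduct x x = ‖e t‖ ^ 2 := by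
      rw [← inner_eq_dot', real_inner_self_eq_norm_sq]
    rw [inner_neg_right, real_inner_smul_right, inner_eq_dot', WithLp.ofLp_toLp]
    have : μ * ‖e t‖ ^ 2 ≤ dotProduct x (Q t *ᵥ x) := by
      simpa [hdd, smul_eq_mul] using hq
    nlinarith
  -- F antitone on [t_c, ∞)
  have hA : AntitoneOn F (Set.Ici t_c) := by
    apply antitoneOn_of_deriv_nonpos (convex_Ici t_c)
    · intro t ht
      exact ((hFderiv t (le_trans htc ht)).continuousAt).continuousWithinAt
    · intro t ht
      rw [interior_Ici] at ht
      exact ((hFderiv t (le_trans htc (le_of_lt ht))).differentiableAt).differentiableWithinAt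
    · intro t ht
      rw [interior_Ici] at ht
      have htc' : t_c ≤ t := le_of_lt ht
      rw [(hFderiv t (le_trans htc htc')).deriv]
      have hk := hkey t htc'
      have hEpos : 0 < Real.exp (c * (t - t_c)) := Real.exp_pos _
      have hm := mul_le_mul_of_nonneg_right hk hEpos.le
      simp only [hc]
      nlinarith [sq_nonneg ‖e t‖]
  intro t ht
  have hFle : F t ≤ F t_c := hA (Set.self_mem_Ici) ht ht
  have hFtc : F t_c = ‖e t_c‖ ^ 2 := by simp [hF]
  have hsq : ‖e t‖ ^ 2 ≤ (‖e t_c‖ * Real.exp (-(γ * μ * (t - t_c)))) ^ 2 := by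
    have hEpos : 0 < Real.exp (c * (t - t_c)) := Real.exp_pos _
    rw [mul_pow, ← Real.exp_nat_mul]
    have h1 : ‖e t‖ ^ 2 * Real.exp (c * (t - t_c)) ≤ ‖e t_c‖ ^ 2 := hFtc ▸ hFle
    have h2 : ((2 : ℕ) : ℝ) * -(γ * μ * (t - t_c)) = -(c * (t - t_c)) := by ring
    rw [h2, Real.exp_neg, ← div_eq_mul_inv, le_div_iff₀ hEpos]
    linarith
  calc ‖e t‖ = Real.sqrt (‖e t‖ ^ 2) := by rw [Real.sqrt_sq (norm_nonneg _)]
    _ ≤ Real.sqrt ((‖e t_c‖ * Real.exp (-(γ * μ * (t - t_c)))) ^ 2) := Real.sqrt_le_sqrt hsq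
    _ = ‖e t_c‖ * Real.exp (-(γ * μ * (t - t_c))) := Real.sqrt_sq (by positivity)
end

section
/- Let k_p ≠ 0, let v ∈ EuclideanSpace ℝ (Fin 2) be a unit vector, and let a : ℝ → EuclideanSpace ℝ (Fin 2) satisfy a(t) ≠ 0 and a(t)/‖a(t)‖ = v for all t ≥ 0 (i.e. the orientation of a is time-invariant). Define G(t) := k_p • (1 - vvᵀ) ∈ Matrix (Fin 2) (Fin 2) ℝ (the scaled projection onto the orthogonal complement of v, equal to k_p V₂V₂ᵀ with V₂ = R_{π/2}v). Then G(t) *ᵥ v = 0 for all t with v ≠ 0, and consequently for every T > 0 and ε > 0 the matrix (∫ s in 0..T, G(s)ᵀ * G(s)) - ε • 1 is not positive semidefinite, i.e. Gᵀ is not interval exciting. -/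
open MeasureTheory intervalIntegral Matrix

attribute [local instance] Matrix.normedAddCommGroup Matrix.normedSpace

/-- Failure case of Theorem 2 (one active constraint): if the constraint direction
`a(t)/‖a(t)‖` equals a fixed unit vector `v` for all `t ≥ 0`, the goal-estimation
regressor `G(t) = k_p (1 - vvᵀ)` annihilates the nonzero vector `v` for all `t`, and
hence `Gᵀ` is not interval exciting: for every `T > 0` and `ε > 0` the matrix
`(∫₀^T GᵀG) - ε • 1` is not positive semidefinite. -/
theorem stmt_12 (k_p : ℝ) (hk : k_p ≠ 0) (v : EuclideanSpace ℝ (Fin 2)) (hv : ‖v‖ = 1)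
    (a : ℝ → EuclideanSpace ℝ (Fin 2)) (hane : ∀ t : ℝ, 0 ≤ t → a t ≠ 0)
    (hdir : ∀ t : ℝ, 0 ≤ t → ‖a t‖⁻¹ • a t = v)
    (G : ℝ → Matrix (Fin 2) (Fin 2) ℝ)
    (hGdef : ∀ t : ℝ, G t = k_p • ((1 : Matrix (Fin 2) (Fin 2) ℝ) - vecMulVec v v)) :
    v ≠ 0 ∧ (∀ t : ℝ, G t *ᵥ v = 0) ∧
      ∀ T > (0:ℝ), ∀ ε > (0:ℝ),
        ¬ ((∫ s in (0:ℝ)..T, (G s)ᵀ * G s) - ε • (1 : Matrix (Fin 2) (Fin 2) ℝ)).PosSemidef := by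
  have hvne : v ≠ 0 := by
    intro h; rw [h, norm_zero] at hv; norm_num at hv
  have hdot : (v : Fin 2 → ℝ) ⬝ᵥ v = 1 := by
    have := real_inner_self_eq_norm_sq v
    rw [hv] at this
    simp only [PiLp.inner_apply, RCLike.inner_apply, conj_trivial, Fin.sum_univ_two] at this
    simp only [dotProduct, Fin.sum_univ_two]; linarith
  have hvmv : vecMulVec (v : Fin 2 → ℝ) v *ᵥ v = v := by
    have h1 : v 0 * v 0 + v 1 * v 1 = 1 := by
      simpa [dotProduct, Fin.sum_univ_two] using hdot
    funext i
    simp only [Matrix.mulVec, dotProduct, Matrix.vecMulVec_apply, Fin.sum_univ_two]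
    linear_combination v i * h1
  have hGv : ∀ t : ℝ, G t *ᵥ v = 0 := by
    intro t
    rw [hGdef t, Matrix.smul_mulVec, Matrix.sub_mulVec, Matrix.one_mulVec, hvmv]
    simp
  refine ⟨hvne, hGv, ?_⟩
  intro T hT ε hε hpsd
  have hconst : (∫ s in (0:ℝ)..T, (G s)ᵀ * G s)
      = T • ((k_p • ((1 : Matrix (Fin 2) (Fin 2) ℝ) - vecMulVec v v))ᵀ *
        (k_p • ((1 : Matrix (Fin 2) (Fin 2) ℝ) - vecMulVec v v))) := by
    have : (fun s => (G s)ᵀ * G s)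
        = fun _ => (k_p • ((1 : Matrix (Fin 2) (Fin 2) ℝ) - vecMulVec v v))ᵀ *
          (k_p • ((1 : Matrix (Fin 2) (Fin 2) ℝ) - vecMulVec v v)) := by
      funext s; rw [hGdef s]
    rw [this, intervalIntegral.integral_const, sub_zero]
  have hMv : (∫ s in (0:ℝ)..T, (G s)ᵀ * G s) *ᵥ v = 0 := by
    rw [hconst, Matrix.smul_mulVec, ← Matrix.mulVec_mulVec]
    have := hGv 0
    rw [hGdef 0] at this
    rw [this]
    simp
  have h := hpsd.dotProduct_mulVec_nonneg v
  have hquad : (star v : Fin 2 → ℝ) ⬝ᵥ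
      (((∫ s in (0:ℝ)..T, (G s)ᵀ * G s) - ε • (1 : Matrix (Fin 2) (Fin 2) ℝ)) *ᵥ v) = -ε := by
    rw [Matrix.sub_mulVec, hMv, Matrix.smul_mulVec, Matrix.one_mulVec]
    simp [dotProduct_smul, star_trivial, hdot]
  rw [hquad] at h
  simp at h
  linarith
end

section
/- Let x, x₁, x₂ ∈ EuclideanSpace ℝ (Fin 2), D > 0, and λ < 0 with x ≠ x₂. Suppose (x - x₁) = λ • (x - x₂), ‖x - x₁‖ ≥ D, ‖x - x₂‖ ≥ D, and λ · (‖x - x₂‖² - D²) = ‖x - x₁‖² - D². Then λ = -1, ‖x - x₁‖ = ‖x - x₂‖ = D, and x = (1/2) • (x₁ + x₂), i.e. the robot is located exactly at the midpoint of the two obstacles with both safety constraints tight. -/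
/-- Geometric conclusion of Lemma 4: if the two constraint rows are anti-parallel
(`x - x₁ = λ (x - x₂)` with `λ < 0`), both distances are safe (`≥ D`), and the active
constraints are consistent (`λ(‖x - x₂‖² - D²) = ‖x - x₁‖² - D²`), then `λ = -1`, both
distances equal `D`, and the robot sits at the midpoint of the two obstacles. -/
theorem stmt_15 (x x₁ x₂ : EuclideanSpace ℝ (Fin 2)) (D : ℝ) (hD : 0 < D)
    (lam : ℝ) (hlam : lam < 0) (hne : x ≠ x₂)
    (hpar : x - x₁ = lam • (x - x₂))
    (h1 : D ≤ ‖x - x₁‖) (h2 : D ≤ ‖x - x₂‖)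
    (hcons : lam * (‖x - x₂‖ ^ 2 - D ^ 2) = ‖x - x₁‖ ^ 2 - D ^ 2) :
    lam = -1 ∧ ‖x - x₁‖ = D ∧ ‖x - x₂‖ = D ∧ x = (1 / 2 : ℝ) • (x₁ + x₂) := by
  have hnorm : ‖x - x₁‖ = -lam * ‖x - x₂‖ := by
    rw [hpar, norm_smul, Real.norm_eq_abs, abs_of_neg hlam]
  rw [hnorm] at hcons h1
  have key : (lam * ‖x - x₂‖ ^ 2 + D ^ 2) * (1 - lam) = 0 := by ring_nf; nlinarith [hcons]
  have hne1 : (1 : ℝ) - lam ≠ 0 := by linarith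
  have hk : lam * ‖x - x₂‖ ^ 2 = -D ^ 2 := by
    have := (mul_eq_zero.mp key).resolve_right hne1
    linarith
  have hk2 : lam ^ 2 * ‖x - x₂‖ ^ 2 = -lam * D ^ 2 := by linear_combination lam * hk
  have hA : -lam ≥ 1 := by nlinarith [mul_le_mul h1 h1 hD.le (le_trans hD.le h1), mul_pos hD hD]
  have hB : lam ≥ -1 := by nlinarith [mul_le_mul h2 h2 hD.le (le_trans hD.le h2), mul_pos hD hD]
  have hl : lam = -1 := by linarith
  subst hl
  have hr : ‖x - x₂‖ = D := by nlinarith [norm_nonneg (x - x₂)]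
  refine ⟨rfl, by rw [hnorm, hr]; ring, hr, ?_⟩
  have : x - x₁ = -(x - x₂) := by rw [hpar]; simp
  have h2x : (2 : ℝ) • x = x₁ + x₂ := by
    have := sub_eq_iff_eq_add.mp this
    linear_combination (norm := module) this
  calc x = (1/2 : ℝ) • ((2 : ℝ) • x) := by module
    _ = (1/2 : ℝ) • (x₁ + x₂) := by rw [h2x]
end
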